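/- Let Λ ⊂ ℝ^n be a full-rank lattice with minimal (squared) norm λ₁ = min_{x ∈ Λ, x ≠ 0} ‖x‖², and let 0 < q < 1. Then Θ_Λ(q) = (1 - q^{λ₁}) - log(q) · λ₁ · ∫_1^∞ Σ_Λ(λ₁ t) q^{λ₁ t} dt, where Σ_Λ(r) = #{x ∈ Λ : ‖x‖² ≤ r}. -/

import Mathlib

/-!
For `u ≥ λ₁` the layer-cake formula gives
`q ^ u = -log q · λ₁ · ∫_{t > 1} 1[u ≤ λ₁ t] q ^ (λ₁ t) dt`.
Replacing every `‖x‖²` by `max λ₁ ‖x‖²` changes only the term `x = 0` of `Θ_Λ(q)`, from `1` to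
`q ^ λ₁`. Summing the formula over `Λ` and exchanging sum and integral (legitimate because
`‖M z‖²` dominates a multiple of `‖z‖²`, so the theta series converges) turns the sum of the
indicators into the counting function `Σ_Λ(λ₁ t)`.
-/

open MeasureTheory Set Real

theorem summable_exp_neg_mul_int_sq {a : ℝ} (ha : 0 < a) :
    Summable fun m : ℤ => exp (-a * (m : ℝ) ^ 2) := by
  have hτ : 0 < ((a / π : ℝ) * Complex.I).im := by
    rw [Complex.mul_I_im, Complex.ofReal_re]; positivity
  convert ((summable_jacobiTheta₂_term_iff 0 _).mpr hτ).norm using 2 with m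
  rw [norm_jacobiTheta₂_term, Complex.mul_I_im, Complex.ofReal_re, Complex.zero_im]
  congr 1
  field_simp
  ring

theorem summable_prod_comp_of_nonneg {α : Type*} {g : α → ℝ} (hg0 : ∀ a, 0 ≤ g a)
    (hg : Summable g) (m : ℕ) : Summable fun z : Fin m → α => ∏ i, g (z i) := by
  induction m with
  | zero => exact Summable.of_finite
  | succ m ih =>
    rw [← (Fin.consEquiv fun _ => α).summable_iff]
    refine (hg.mul_of_nonneg ih hg0 fun z => Finset.prod_nonneg fun i _ => hg0 _).congr
      fun p => ?_
    simp [Fin.consEquiv, Fin.prod_univ_succ]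

namespace Matrix

variable {n : ℕ} {M : Matrix (Fin n) (Fin n) ℝ}

theorem sum_sq_mulVec_pos (hM : IsUnit M.det) {v : Fin n → ℝ} (hv : v ≠ 0) :
    0 < ∑ i, (M *ᵥ v) i ^ 2 := by
  have hMv : M *ᵥ v ≠ 0 := fun h => hv (eq_zero_of_mulVec_eq_zero hM.ne_zero h)
  obtain ⟨i, hi⟩ := Function.ne_iff.mp hMv
  exact Finset.sum_pos' (fun j _ => sq_nonneg _) ⟨i, Finset.mem_univ i, sq_pos_of_ne_zero hi⟩

theorem exists_pos_mul_sum_sq_le_sum_sq_mulVec (hM : IsUnit M.det) :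
    ∃ c > 0, ∀ v : Fin n → ℝ, c * ∑ i, v i ^ 2 ≤ ∑ i, (M *ᵥ v) i ^ 2 := by
  set A := M⁻¹
  set K : ℝ := ∑ j, ∑ i, A j i ^ 2
  refine ⟨(K + 1)⁻¹, by positivity, fun v => ?_⟩
  set w := M *ᵥ v
  have hv : v = A *ᵥ w := by rw [mulVec_mulVec, nonsing_inv_mul M hM, one_mulVec]
  have hbound : ∑ j, v j ^ 2 ≤ K * ∑ i, w i ^ 2 := by
    rw [hv, Finset.sum_mul]
    refine Finset.sum_le_sum fun j _ => ?_
    simpa [mulVec, dotProduct] using Finset.sum_mul_sq_le_sq_mul_sq Finset.univ (A j) w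
  rw [inv_mul_le_iff₀ (by positivity)]
  nlinarith [show 0 ≤ ∑ i, w i ^ 2 by positivity]

theorem summable_rpow_sum_sq_mulVec_intCast (hM : IsUnit M.det) {q : ℝ} (hq0 : 0 < q)
    (hq1 : q < 1) :
    Summable fun z : Fin n → ℤ => q ^ ∑ i, (M *ᵥ fun j => (z j : ℝ)) i ^ 2 := by
  obtain ⟨c, hc, hcM⟩ := exists_pos_mul_sum_sq_le_sum_sq_mulVec hM
  have ha : 0 < -(c * log q) := by nlinarith [log_neg hq0 hq1]
  refine (summable_prod_comp_of_nonneg (fun _ => (exp_pos _).le)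
    (summable_exp_neg_mul_int_sq ha) n).of_nonneg_of_le (fun z => rpow_nonneg hq0.le _)
    fun z => ?_
  rw [← exp_sum, rpow_def_of_pos hq0, exp_le_exp, ← Finset.mul_sum]
  nlinarith [hcM fun j => (z j : ℝ), log_neg hq0 hq1]

end Matrix

theorem setIntegral_Ioi_indicator_Ici_exp {c : ℝ} (hc : c < 0) {a s : ℝ} (has : a ≤ s) :
    ∫ t in Ioi a, (Ici s).indicator (fun t => exp (c * t)) t = -exp (c * s) / c := by
  rw [integral_indicator measurableSet_Ici, Measure.restrict_restrict measurableSet_Ici,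
    setIntegral_congr_set (Ioi_ae_eq_Ici.symm.inter (ae_eq_refl _) :
      (Ici s ∩ Ioi a : Set ℝ) =ᵐ[volume] (Ioi s ∩ Ioi a : Set ℝ)), Ioi_inter_Ioi,
    max_eq_left has, integral_exp_mul_Ioi hc]

section LayerCake

variable {q lam : ℝ}

theorem rpow_mul_eq_exp (hq : 0 < q) (t : ℝ) : q ^ (lam * t) = exp (log q * lam * t) := by
  rw [rpow_def_of_pos hq, mul_assoc]

theorem integrableOn_Ioi_indicator_rpow_mul (hq0 : 0 < q) (hq1 : q < 1) (hlam : 0 < lam)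
    (a : ℝ) {s : Set ℝ} (hs : MeasurableSet s) :
    IntegrableOn (s.indicator fun t => q ^ (lam * t)) (Ioi a) := by
  simp_rw [rpow_mul_eq_exp hq0]
  exact (integrableOn_exp_mul_Ioi (mul_neg_of_neg_of_pos (log_neg hq0 hq1) hlam) a).indicator hs

theorem setIntegral_Ioi_one_indicator_rpow_mul (hq0 : 0 < q) (hq1 : q < 1) (hlam : 0 < lam)
    {u : ℝ} (hu : lam ≤ u) :
    ∫ t in Ioi 1, {t | u ≤ lam * t}.indicator (fun t => q ^ (lam * t)) t
      = q ^ u / (-log q * lam) := by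
  have hlog : log q < 0 := log_neg hq0 hq1
  have hset : {t | u ≤ lam * t} = Ici (u / lam) := by
    ext t; rw [mem_ofPred_eq, mem_Ici, div_le_iff₀' hlam]
  simp_rw [hset, rpow_mul_eq_exp hq0]
  rw [setIntegral_Ioi_indicator_Ici_exp (mul_neg_of_neg_of_pos hlog hlam)
    ((one_le_div hlam).mpr hu), rpow_def_of_pos hq0]
  field_simp [hlog.ne]

end LayerCake

theorem tsum_rpow_eq_integral_card {ι : Type*} [Countable ι] (F : ι → ℝ) {q lam : ℝ}
    (hq0 : 0 < q) (hq1 : q < 1) (hlam : 0 < lam) (z₀ : ι) (hF₀ : F z₀ = 0)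
    (hF : ∀ z ≠ z₀, lam ≤ F z) (hsum : Summable fun z => q ^ F z) :
    ∑' z, q ^ F z = (1 - q ^ lam) - log q * lam *
      ∫ t in Ioi 1, (Nat.card {z // F z ≤ lam * t} : ℝ) * q ^ (lam * t) := by
  set s : ι → ℝ := fun z => max lam (F z)
  set g : ι → ℝ → ℝ := fun z => {t | s z ≤ lam * t}.indicator fun t => q ^ (lam * t)
  have hsum_s : Summable fun z => q ^ s z :=
    hsum.of_nonneg_of_le (fun z => rpow_nonneg hq0.le _)
      fun z => rpow_le_rpow_of_exponent_ge hq0 hq1.le (le_max_right _ _)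
  have hsplit : ∑' z, q ^ F z = (1 - q ^ lam) + ∑' z, q ^ s z := by
    suffices ∑' z, q ^ F z - ∑' z, q ^ s z = 1 - q ^ lam by linarith
    rw [← hsum.tsum_sub hsum_s, tsum_eq_single z₀ fun z hz => ?_]
    · simp [s, hF₀, hlam.le]
    · simp [s, max_eq_right (hF z hz)]
  have hg_integral : ∀ z, ∫ t in Ioi 1, g z t = q ^ s z / (-log q * lam) :=
    fun z => setIntegral_Ioi_one_indicator_rpow_mul hq0 hq1 hlam (le_max_left _ _)
  have hg_nonneg : ∀ z t, 0 ≤ g z t := fun z t =>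
    indicator_nonneg (fun t _ => rpow_nonneg hq0.le _) t
  have hswap : ∑' z, ∫ t in Ioi 1, g z t = ∫ t in Ioi 1, ∑' z, g z t := by
    refine integral_tsum_of_summable_integral_norm (fun z => ?_) ?_
    · exact integrableOn_Ioi_indicator_rpow_mul hq0 hq1 hlam 1
        (measurableSet_le measurable_const (by fun_prop))
    · simp_rw [fun z t => norm_of_nonneg (hg_nonneg z t), hg_integral]
      exact hsum_s.div_const _
  have hcount : ∀ t ∈ Ioi (1 : ℝ),
      ∑' z, g z t = (Nat.card {z // F z ≤ lam * t} : ℝ) * q ^ (lam * t) := by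
    intro t ht
    have hlt : lam ≤ lam * t := le_mul_of_one_le_right hlam.le (le_of_lt ht)
    have : ∀ z, g z t = {z | F z ≤ lam * t}.indicator (fun _ => q ^ (lam * t)) z := by
      intro z
      simp only [g, s, indicator_apply, mem_ofPred_eq, max_le_iff, hlt, true_and]
    rw [tsum_congr this, ← tsum_subtype, tsum_const, nsmul_eq_mul]
    rfl
  have hlog : log q ≠ 0 := (log_neg hq0 hq1).ne
  rw [hsplit, ← setIntegral_congr_fun measurableSet_Ioi hcount, ← hswap]
  simp_rw [hg_integral, tsum_div_const]
  field_simp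
  ring

theorem stmt_2 (n : ℕ) (M : Matrix (Fin n) (Fin n) ℝ) (hM : IsUnit M.det)
    (lam : ℝ)
    (hlam : IsLeast {r : ℝ | ∃ z : Fin n → ℤ, z ≠ 0 ∧
      r = ∑ i, (M.mulVec (fun j => (z j : ℝ))) i ^ 2} lam)
    (q : ℝ) (hq0 : 0 < q) (hq1 : q < 1) :
    (∑' z : Fin n → ℤ, q ^ (∑ i, (M.mulVec (fun j => (z j : ℝ))) i ^ 2)) =
      (1 - q ^ lam) - Real.log q * lam *
        ∫ t in Set.Ioi (1 : ℝ),
          (Nat.card {z : Fin n → ℤ //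
              ∑ i, (M.mulVec (fun j => (z j : ℝ))) i ^ 2 ≤ lam * t} : ℝ) *
            q ^ (lam * t) := by
  obtain ⟨⟨z₀, hz₀, hlam₀⟩, hmin⟩ := hlam
  have hlam_pos : 0 < lam := by
    rw [hlam₀]
    refine Matrix.sum_sq_mulVec_pos hM fun h => hz₀ ?_
    ext j
    simpa using congrFun h j
  exact tsum_rpow_eq_integral_card _ hq0 hq1 hlam_pos 0
    (by simp [← Pi.zero_def])
    (fun z hz => hmin ⟨z, hz, rfl⟩) (Matrix.summable_rpow_sum_sq_mulVec_intCast hM hq0 hq1)
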